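/- arXiv:2209.08518 — 5 statements merged into one kernel-verified Lean document; each statement's English description precedes it below -/
import Mathlib

section
/- Let X be an at most countable set and T : X → X such that the graph G_T (with edges {(Tx,x) : x ∈ X}) is connected. Then G_T contains at most one strongly connected component with a non-empty set of edges. -/
/-- Mutual reachability (by directed paths) in a directed graph with edge relation `E`. -/
def StronglyConn {V : Type*} (E : V → V → Prop) (v w : V) : Prop :=
  Relation.ReflTransGen E v w ∧ Relation.ReflTransGen E w v

/-- The strongly connected component of a vertex `v`. -/
def SCC {V : Type*} (E : V → V → Prop) (v : V) : Set V :=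
  {u | StronglyConn E v u}

/-!
An edge inside a strongly connected component closes a directed cycle, so the vertices of such a
component are periodic points of `T`. Two vertices joined by an undirected path in `G_T` have a
common forward iterate, and a periodic point is a forward iterate of each of its own iterates;
hence two periodic points of the connected graph `G_T` reach each other, and their components
coincide.
-/

open Function Relation

theorem scc_eq_of_stronglyConn {V : Type*} {E : V → V → Prop} {v w : V}
    (h : StronglyConn E v w) : SCC E v = SCC E w := by
  ext u
  constructor
  · rintro ⟨hvu, huv⟩
    exact ⟨h.2.trans hvu, huv.trans h.1⟩
  · rintro ⟨hwu, huw⟩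
    exact ⟨h.1.trans hwu, huw.trans h.2⟩

section Iterate

variable {X : Type*} {T : X → X}

theorem reflTransGen_iff_exists_iterate_eq {v w : X} :
    ReflTransGen (fun a b => T b = a) v w ↔ ∃ n, T^[n] w = v := by
  constructor
  · intro h
    induction h with
    | refl => exact ⟨0, rfl⟩
    | tail _ hbc ih =>
      obtain ⟨n, hn⟩ := ih
      exact ⟨n + 1, by rw [iterate_succ_apply, hbc, hn]⟩
  · rintro ⟨n, rfl⟩
    induction n generalizing w with
    | zero => exact .refl
    | succ n ih => exact (ih (w := T w)).tail rfl

theorem mem_periodicPts_of_transGen_self {v : X} (h : TransGen (fun a b => T b = a) v v) :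
    v ∈ periodicPts T := by
  obtain ⟨c, hvc, hcv⟩ := TransGen.tail'_iff.1 h
  obtain ⟨n, hn⟩ := reflTransGen_iff_exists_iterate_eq.1 hvc
  refine mk_mem_periodicPts n.succ_pos ?_
  rw [IsPeriodicPt, IsFixedPt, iterate_succ_apply, hcv, hn]

theorem exists_iterate_eq_iterate_of_reflTransGen {v w : X}
    (h : ReflTransGen (fun a b => T b = a ∨ T a = b) v w) : ∃ i j, T^[i] v = T^[j] w := by
  induction h with
  | refl => exact ⟨0, 0, rfl⟩
  | tail _ hbc ih =>
    obtain ⟨i, j, hij⟩ := ih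
    rcases hbc with hbc | hbc
    · exact ⟨i, j + 1, by rw [iterate_succ_apply, hbc, hij]⟩
    · refine ⟨i + 1, j, ?_⟩
      rw [iterate_succ_apply', hij, ← hbc, ← iterate_succ_apply' T, iterate_succ_apply]

theorem reflTransGen_of_mem_periodicPts {v w : X} (hv : v ∈ periodicPts T)
    (h : ReflTransGen (fun a b => T b = a ∨ T a = b) v w) :
    ReflTransGen (fun a b => T b = a) v w := by
  obtain ⟨k, hk, hper⟩ := mem_periodicPts.1 hv
  obtain ⟨i, j, hij⟩ := exists_iterate_eq_iterate_of_reflTransGen h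
  have hi : i ≤ k * i := Nat.le_mul_of_pos_left i hk
  refine reflTransGen_iff_exists_iterate_eq.2 ⟨k * i - i + j, ?_⟩
  rw [iterate_add_apply, ← hij, ← iterate_add_apply, Nat.sub_add_cancel hi]
  exact (hper.mul_const i).eq

end Iterate

theorem stmt_5_general {X : Type*} (T : X → X)
    (hconn : ∀ v w : X,
      Relation.ReflTransGen (fun a b => T b = a ∨ T a = b) v w)
    (v₀ v₁ : X)
    (h₀ : ∃ a b : X, a ∈ SCC (fun a b => T b = a) v₀ ∧ b ∈ SCC (fun a b => T b = a) v₀ ∧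
      T b = a)
    (h₁ : ∃ a b : X, a ∈ SCC (fun a b => T b = a) v₁ ∧ b ∈ SCC (fun a b => T b = a) v₁ ∧
      T b = a) :
    SCC (fun a b => T b = a) v₀ = SCC (fun a b => T b = a) v₁ := by
  obtain ⟨a₀, b₀, ha₀, hb₀, hab₀⟩ := h₀
  obtain ⟨a₁, b₁, ha₁, hb₁, hab₁⟩ := h₁
  have hv₀ : v₀ ∈ periodicPts T :=
    mem_periodicPts_of_transGen_self ((TransGen.tail' ha₀.1 hab₀).trans_left hb₀.2)
  have hv₁ : v₁ ∈ periodicPts T :=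
    mem_periodicPts_of_transGen_self ((TransGen.tail' ha₁.1 hab₁).trans_left hb₁.2)
  exact scc_eq_of_stronglyConn
    ⟨reflTransGen_of_mem_periodicPts hv₀ (hconn v₀ v₁),
      reflTransGen_of_mem_periodicPts hv₁ (hconn v₁ v₀)⟩

/-- If `X` is at most countable and `T : X → X` is such that the graph `G_T`
(edges `{(Tx, x) : x ∈ X}`) is connected (as an undirected graph), then `G_T` contains at
most one strongly connected component with a non-empty set of edges: any two such
components coincide. -/
theorem stmt_5 {X : Type*} [Countable X] (T : X → X)
    (hconn : ∀ v w : X,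
      Relation.ReflTransGen (fun a b => T b = a ∨ T a = b) v w)
    (v₀ v₁ : X)
    (h₀ : ∃ a b : X, a ∈ SCC (fun a b => T b = a) v₀ ∧ b ∈ SCC (fun a b => T b = a) v₀ ∧
      T b = a)
    (h₁ : ∃ a b : X, a ∈ SCC (fun a b => T b = a) v₁ ∧ b ∈ SCC (fun a b => T b = a) v₁ ∧
      T b = a) :
    SCC (fun a b => T b = a) v₀ = SCC (fun a b => T b = a) v₁ :=
  stmt_5_general T hconn v₀ v₁ h₀ h₁
end

section
/- Let X be countable, T : X → X with G_T connected, and let G_0 = (V_0,E_0) be the unique strongly connected component of G_T with non-empty edge set. Form G' = (V_T \ V_0, E') where E' consists of edges of G_T with both endpoints outside V_0. Then every connected component of G' is a rooted directed tree, i.e. a directed tree possessing a (unique) vertex of in-degree 0. -/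
open Function Relation

namespace FunctionalGraph

variable {X : Type*} {T : X → X}

theorem reflTransGen_iff_exists_iterate {a b : X} :
    ReflTransGen (fun a b => T b = a) a b ↔ ∃ n, T^[n] b = a := by
  constructor
  · intro h
    induction h with
    | refl => exact ⟨0, rfl⟩
    | tail _ hbc ih =>
      obtain ⟨n, hn⟩ := ih
      exact ⟨n + 1, by rw [iterate_succ_apply, hbc, hn]⟩
  · rintro ⟨n, rfl⟩
    induction n with
    | zero => exact .refl
    | succ n ih => exact .head (iterate_succ_apply' T n b).symm ih

theorem exists_iterate_eq_iterate_of_reflTransGen {x y : X}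
    (h : ReflTransGen (fun a b => T b = a ∨ T a = b) x y) : ∃ k m, T^[k] x = T^[m] y := by
  induction h with
  | refl => exact ⟨0, 0, rfl⟩
  | @tail b c _ hbc ih =>
    obtain ⟨k, m, hkm⟩ := ih
    rcases hbc with hcb | hbc
    · exact ⟨k, m + 1, by rw [hkm, iterate_succ_apply, hcb]⟩
    · exact ⟨k + 1, m, by rw [iterate_succ_apply', hkm, ← iterate_succ_apply' T m b,
        iterate_succ_apply, hbc]⟩

theorem iterate_mem_periodicPts {x : X} (hx : x ∈ periodicPts T) (n : ℕ) :
    T^[n] x ∈ periodicPts T := by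
  obtain ⟨p, hp, hpx⟩ := hx
  exact mk_mem_periodicPts hp (hpx.apply_iterate n)

theorem exists_iterate_eq_of_iterate_eq_iterate {x y : X} (hx : x ∈ periodicPts T)
    (hy : y ∈ periodicPts T) {k m : ℕ} (h : T^[k] x = T^[m] y) : ∃ n, T^[n] x = y := by
  rw [← mem_periodicOrbit_iff hx, ← periodicOrbit_apply_iterate_eq hx k, h,
    periodicOrbit_apply_iterate_eq hy m]
  exact self_mem_periodicOrbit hy

theorem mem_periodicPts_of_apply_mem_scc {v a b : X} (ha : a ∈ SCC (fun a b => T b = a) v)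
    (hb : b ∈ SCC (fun a b => T b = a) v) (hab : T b = a) : v ∈ periodicPts T := by
  obtain ⟨n, hn⟩ := reflTransGen_iff_exists_iterate.1 ha.1
  obtain ⟨m, hm⟩ := reflTransGen_iff_exists_iterate.1 hb.2
  refine mk_mem_periodicPts (n := n + 1 + m) (by omega) ?_
  rw [IsPeriodicPt, IsFixedPt, iterate_add_apply, hm, iterate_succ_apply, hab, hn]

section Connected

variable (hconn : ∀ v w : X, ReflTransGen (fun a b => T b = a ∨ T a = b) v w)
include hconn

theorem scc_eq_periodicPts {v : X} (hv : v ∈ periodicPts T) :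
    SCC (fun a b => T b = a) v = periodicPts T := by
  ext x
  simp only [SCC, StronglyConn, Set.mem_ofPred_eq, reflTransGen_iff_exists_iterate]
  constructor
  · rintro ⟨-, m, rfl⟩
    exact iterate_mem_periodicPts hv m
  · intro hx
    obtain ⟨k, m, hkm⟩ := exists_iterate_eq_iterate_of_reflTransGen (hconn x v)
    exact ⟨exists_iterate_eq_of_iterate_eq_iterate hx hv hkm,
      exists_iterate_eq_of_iterate_eq_iterate hv hx hkm.symm⟩

theorem exists_iterate_mem_periodicPts {v : X} (hv : v ∈ periodicPts T) (x : X) :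
    ∃ k, T^[k] x ∈ periodicPts T := by
  obtain ⟨k, m, hkm⟩ := exists_iterate_eq_iterate_of_reflTransGen (hconn x v)
  exact ⟨k, hkm ▸ iterate_mem_periodicPts hv m⟩

end Connected

variable (T) in
def OffCycleAdj (a b : X) : Prop :=
  T b = a ∧ a ∉ periodicPts T ∧ b ∉ periodicPts T

theorem not_reflTransGen_offCycleAdj {a b : X} (hab : OffCycleAdj T a b) :
    ¬ ReflTransGen (OffCycleAdj T) b a := by
  intro hba
  obtain ⟨n, hn⟩ :=
    reflTransGen_iff_exists_iterate.1 (ReflTransGen.mono (fun _ _ h => h.1) _ _ hba)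
  exact hab.2.2 (mk_mem_periodicPts n.succ_pos (by
    rw [IsPeriodicPt, IsFixedPt, iterate_succ_apply, hab.1, hn]))

theorem OffCycleAdj.left_unique {x a b : X} (ha : OffCycleAdj T a x) (hb : OffCycleAdj T b x) :
    a = b :=
  ha.1.symm.trans hb.1

theorem notMem_periodicPts_of_reflTransGen {u x : X} (hu : u ∉ periodicPts T)
    (h : ReflTransGen (SymmGen (OffCycleAdj T)) u x) : x ∉ periodicPts T := by
  rcases h.cases_tail with rfl | ⟨y, -, hy | hy⟩
  exacts [hu, hy.2.2, hy.2.1]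

theorem exists_reflTransGen_of_iterate_mem_periodicPts {k : ℕ} {x : X}
    (hx : x ∉ periodicPts T) (hk : T^[k] x ∈ periodicPts T) :
    ∃ ω, T ω ∈ periodicPts T ∧ ReflTransGen (OffCycleAdj T) ω x := by
  induction k generalizing x with
  | zero => exact absurd hk hx
  | succ k ih =>
    by_cases hTx : T x ∈ periodicPts T
    · exact ⟨x, hTx, .refl⟩
    · obtain ⟨ω, hω, hωx⟩ := ih hTx (by rwa [← iterate_succ_apply])
      exact ⟨ω, hω, hωx.tail ⟨rfl, hTx, hx⟩⟩

theorem exists_iterate_eq_of_reflTransGen {ω y x : X} (hω : T ω ∈ periodicPts T)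
    (h : ReflTransGen (SymmGen (OffCycleAdj T)) y x) (hy : ∃ n, T^[n] y = ω) :
    ∃ n, T^[n] x = ω := by
  induction h with
  | refl => exact hy
  | @tail b c _ hbc ih =>
    obtain ⟨n, hn⟩ := ih
    rcases hbc with hbc | hcb
    · exact ⟨n + 1, by rw [iterate_succ_apply, hbc.1, hn]⟩
    · cases n with
      | zero =>
        rw [iterate_zero_apply] at hn
        subst hn
        exact absurd (hcb.1 ▸ hω) hcb.2.1
      | succ n => exact ⟨n, by rw [← hcb.1, ← iterate_succ_apply, hn]⟩

theorem eq_of_iterate_eq_of_apply_mem_periodicPts {ω ω' : X} (hω' : T ω' ∈ periodicPts T)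
    (hω : ω ∉ periodicPts T) {n : ℕ} (h : T^[n] ω' = ω) : ω' = ω := by
  cases n with
  | zero => exact h
  | succ n => exact absurd (h ▸ iterate_succ_apply T n ω' ▸ iterate_mem_periodicPts hω' n) hω

theorem existsUnique_root {k : ℕ} {u : X} (hu : u ∉ periodicPts T)
    (hk : T^[k] u ∈ periodicPts T) :
    ∃! ω, ω ∈ {x | ReflTransGen (SymmGen (OffCycleAdj T)) u x} ∧
      ∀ x ∈ {x | ReflTransGen (SymmGen (OffCycleAdj T)) u x}, ¬ OffCycleAdj T x ω := by
  obtain ⟨ω, hω, hωu⟩ := exists_reflTransGen_of_iterate_mem_periodicPts hu hk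
  have hωK : ReflTransGen (SymmGen (OffCycleAdj T)) u ω :=
    symm (ReflTransGen.mono (fun _ _ => SymmGen.of_rel) _ _ hωu)
  refine ⟨ω, ⟨hωK, fun x _ hx => hx.2.1 (hx.1 ▸ hω)⟩, ?_⟩
  rintro ω' ⟨hω'K, hroot⟩
  have hω'V := notMem_periodicPts_of_reflTransGen hu hω'K
  have hTω' : T ω' ∈ periodicPts T := by
    by_contra hTω'
    exact hroot _ (hω'K.tail (SymmGen.of_rel_symm ⟨rfl, hTω', hω'V⟩)) ⟨rfl, hTω', hω'V⟩
  obtain ⟨n, hn⟩ := exists_iterate_eq_of_reflTransGen hω (symm hωK |>.trans hω'K) ⟨0, rfl⟩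
  exact eq_of_iterate_eq_of_apply_mem_periodicPts hTω'
    (notMem_periodicPts_of_reflTransGen hu hωK) hn

end FunctionalGraph

open FunctionalGraph in
theorem stmt_7_general {X : Type*} (T : X → X)
    (hconn : ∀ v w : X,
      Relation.ReflTransGen (fun a b => T b = a ∨ T a = b) v w)
    (v₀ : X)
    (h₀ : ∃ a b : X, a ∈ SCC (fun a b => T b = a) v₀ ∧ b ∈ SCC (fun a b => T b = a) v₀ ∧
      T b = a)
    (u : X) (hu : u ∉ SCC (fun a b => T b = a) v₀) :
    ∀ E' : X → X → Prop, (E' = fun a b =>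
        T b = a ∧ a ∉ SCC (fun a b => T b = a) v₀ ∧ b ∉ SCC (fun a b => T b = a) v₀) →
    ∀ K : Set X, (K = {x | Relation.ReflTransGen (fun a b => E' a b ∨ E' b a) u x}) →
      (∀ a ∈ K, ∀ b ∈ K, Relation.ReflTransGen (fun s t => (E' s t ∨ E' t s)) a b) ∧
      (∀ a b : X, E' a b → ¬ Relation.ReflTransGen E' b a) ∧
      (∀ x a b : X, E' a x → E' b x → a = b) ∧
      (∃! ω : X, ω ∈ K ∧ ∀ x ∈ K, ¬ E' x ω) := by
  rintro E' rfl K rfl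
  obtain ⟨a, b, ha, hb, hab⟩ := h₀
  have hv₀ := mem_periodicPts_of_apply_mem_scc ha hb hab
  obtain ⟨k, hk⟩ := exists_iterate_mem_periodicPts hconn hv₀ u
  rw [scc_eq_periodicPts hconn hv₀] at hu ⊢
  refine ⟨fun a ha b hb => ?_, fun _ _ => not_reflTransGen_offCycleAdj,
    fun _ _ _ => OffCycleAdj.left_unique, existsUnique_root hu hk⟩
  exact (symm ha : ReflTransGen (SymmGen (OffCycleAdj T)) a u).trans hb

/-- Let `G_T` (edges `{(Tx, x) : x ∈ X}`) be connected and let `V₀` be the (unique)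
strongly connected component with non-empty edge set.  Remove `V₀` and all edges meeting
it, obtaining `G' = (X \ V₀, E')`.  Then every connected component of `G'` (say, the
component `K` of a vertex `u ∉ V₀`) is a rooted directed tree: within `K` the graph is
connected, has no directed cycles, every vertex has in-degree at most 1, and there is a
unique vertex of in-degree 0 (the root). -/
theorem stmt_7 {X : Type*} [Countable X] (T : X → X)
    (hconn : ∀ v w : X,
      Relation.ReflTransGen (fun a b => T b = a ∨ T a = b) v w)
    (v₀ : X)
    (h₀ : ∃ a b : X, a ∈ SCC (fun a b => T b = a) v₀ ∧ b ∈ SCC (fun a b => T b = a) v₀ ∧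
      T b = a)
    (u : X) (hu : u ∉ SCC (fun a b => T b = a) v₀) :
    ∀ E' : X → X → Prop, (E' = fun a b =>
        T b = a ∧ a ∉ SCC (fun a b => T b = a) v₀ ∧ b ∉ SCC (fun a b => T b = a) v₀) →
    ∀ K : Set X, (K = {x | Relation.ReflTransGen (fun a b => E' a b ∨ E' b a) u x}) →
      (∀ a ∈ K, ∀ b ∈ K, Relation.ReflTransGen (fun s t => (E' s t ∨ E' t s)) a b) ∧
      (∀ a b : X, E' a b → ¬ Relation.ReflTransGen E' b a) ∧
      (∀ x a b : X, E' a x → E' b x → a = b) ∧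
      (∃! ω : X, ω ∈ K ∧ ∀ x ∈ K, ¬ E' x ω) :=
  stmt_7_general T hconn v₀ h₀ u hu
end

section
/- Suppose S is a bounded operator on a Hilbert space H with orthonormal basis (e_v)_{v ∈ V} such that S^n e_u ⟂ S^n e_v for all n and all u ≠ v. Fix m ≥ 1 and suppose for each v ∈ V there is a polynomial p_v ∈ ℝ_{m-1}[x] with p_v(n) = ‖S^n e_v‖² for all n ∈ ℕ. Then for every f ∈ H there exists a polynomial p_f ∈ ℝ_{m-1}[x] with p_f(n) = ‖S^n f‖² for all n ∈ ℕ (equivalently, S is m-isometric). -/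
/-!
With `T = ∑ₖ (-1)ᵐ⁻ᵏ (m choose k) S*ᵏ Sᵏ` one has `⟪x, T x⟫ = Δᵐ (n ↦ ‖Sⁿ x‖²) 0`, so `T e_v ⟂ e_v`
because `‖Sⁿ e_v‖²` is a polynomial of degree `< m`, while `T e_u ⟂ e_v` for `u ≠ v` by the
orthogonality of `Sⁿ e_u` and `Sⁿ e_v`. Hence `T = 0`, so `Δᵐ (n ↦ ‖Sⁿ f‖²) = 0` for every `f`, and
a sequence whose `m`-th forward difference vanishes is a polynomial of degree `< m` by Newton's formula.
-/

open Finset Polynomial fwdDiff Nat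

lemma fwdDiff_iter_comp_natCast {R G : Type*} [AddCommMonoidWithOne R] [AddCommGroup G]
    (f : R → G) (m n : ℕ) :
    Δ_[1] ^[m] (fun k : ℕ ↦ f k) n = Δ_[1] ^[m] f n := by
  simp [fwdDiff_iter_eq_sum_shift]

lemma Polynomial.fwdDiff_iter_eval_natCast_eq_zero {R : Type*} [CommRing R] {p : R[X]} {m : ℕ}
    (hp : p.natDegree < m) : Δ_[1] ^[m] (fun n : ℕ ↦ p.eval (n : R)) = 0 := by
  ext n
  rw [fwdDiff_iter_comp_natCast p.eval, fwdDiff_iter_eq_zero_of_degree_lt hp]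
  rfl

lemma fwdDiff_iter_apply_eq_zero_of_le {G : Type*} [AddCommGroup G] {a : ℕ → G} {m j : ℕ}
    (ha : Δ_[1] ^[m] a = 0) (hj : m ≤ j) (n : ℕ) : Δ_[1] ^[j] a n = 0 := by
  obtain ⟨i, rfl⟩ := Nat.exists_eq_add_of_le' hj
  rw [Function.iterate_add_apply, ha]
  simpa using fwdDiff_iter_eq_sum_shift 1 (0 : ℕ → G) i n

lemma exists_polynomial_eval_eq_of_fwdDiff_iter_eq_zero {K : Type*} [Field K] [CharZero K]
    {a : ℕ → K} {m : ℕ} (ha : Δ_[1] ^[m + 1] a = 0) :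
    ∃ p : K[X], p.natDegree ≤ m ∧ ∀ n : ℕ, p.eval (n : K) = a n := by
  -- Newton: `a n = ∑ j ≤ m, (n choose j) Δʲ a 0`, and `n choose j = (descPochhammer j).eval n / j!`.
  refine ⟨∑ j ∈ range (m + 1), C (Δ_[1] ^[j] a 0 / j !) * descPochhammer K j, ?_, fun n ↦ ?_⟩
  · refine natDegree_sum_le_of_forall_le _ _ fun j hj ↦ (natDegree_C_mul_le _ _).trans ?_
    rw [descPochhammer_natDegree]
    exact Nat.lt_succ_iff.mp (mem_range.mp hj)
  have hterm (j : ℕ) : (C (Δ_[1] ^[j] a 0 / j !) * descPochhammer K j).eval (n : K)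
      = n.choose j • Δ_[1] ^[j] a 0 := by
    rw [eval_mul, eval_C, descPochhammer_eval_eq_descFactorial,
      Nat.descFactorial_eq_factorial_mul_choose, nsmul_eq_mul]
    have : (j ! : K) ≠ 0 := Nat.cast_ne_zero.mpr j.factorial_ne_zero
    push_cast
    field_simp
  rw [eval_finsetSum]
  simp_rw [hterm]
  calc ∑ j ∈ range (m + 1), n.choose j • Δ_[1] ^[j] a 0
      = ∑ j ∈ range (m + n + 1), n.choose j • Δ_[1] ^[j] a 0 := by
        refine sum_subset (range_subset_range.2 (by omega)) fun j _ hj ↦ ?_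
        rw [fwdDiff_iter_apply_eq_zero_of_le ha (by simpa using hj), smul_zero]
    _ = ∑ j ∈ range (n + 1), n.choose j • Δ_[1] ^[j] a 0 := by
        refine (sum_subset (range_subset_range.2 (by omega)) fun j _ hj ↦ ?_).symm
        rw [Nat.choose_eq_zero_of_lt (by simpa using hj), zero_smul]
    _ = a n := by simpa using (shift_eq_sum_fwdDiff_iter 1 a n 0).symm

lemma HilbertBasis.eq_zero_of_forall_inner_eq_zero {ι 𝕜 E : Type*} [RCLike 𝕜]
    [NormedAddCommGroup E] [InnerProductSpace 𝕜 E] (b : HilbertBasis ι 𝕜 E) {x : E}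
    (h : ∀ i, inner 𝕜 (b i) x = 0) : x = 0 :=
  (b.hasSum_repr x).unique (by simp [b.repr_apply_apply, h])

section IsometricDefect

variable {𝕜 H : Type*} [RCLike 𝕜] [NormedAddCommGroup H] [InnerProductSpace 𝕜 H] [CompleteSpace H]

/-- `S` is `m`-isometric iff this operator vanishes. -/
noncomputable def isometricDefect (S : H →L[𝕜] H) (m : ℕ) : H →L[𝕜] H :=
  ∑ k ∈ range (m + 1),
    ((-1 : ℤ) ^ (m - k) * m.choose k) • (ContinuousLinearMap.adjoint (S ^ k) * S ^ k)

lemma inner_isometricDefect_apply (S : H →L[𝕜] H) (m : ℕ) (x y : H) :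
    inner 𝕜 x (isometricDefect S m y) =
      ∑ k ∈ range (m + 1), ((-1 : ℤ) ^ (m - k) * m.choose k) • inner 𝕜 ((S ^ k) x) ((S ^ k) y) := by
  simp only [isometricDefect, _root_.sum_apply, smul_apply, mul_apply_eq_comp, inner_sum,
    inner_smul_right_eq_smul, ContinuousLinearMap.adjoint_inner_right]

lemma inner_isometricDefect_self (S : H →L[𝕜] H) (m : ℕ) (x : H) :
    inner 𝕜 x (isometricDefect S m x) = (Δ_[1] ^[m] (fun n ↦ ‖(S ^ n) x‖ ^ 2) 0 : ℝ) := by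
  rw [inner_isometricDefect_apply, fwdDiff_iter_eq_sum_shift]
  simp [inner_self_eq_norm_sq_to_K]

lemma fwdDiff_iter_norm_sq_eq_zero_of_isometricDefect_eq_zero {S : H →L[𝕜] H} {m : ℕ}
    (hS : isometricDefect S m = 0) (x : H) : Δ_[1] ^[m] (fun n ↦ ‖(S ^ n) x‖ ^ 2) = 0 := by
  ext n
  have h := inner_isometricDefect_self S m ((S ^ n) x)
  rw [hS, zero_apply, inner_zero_right, eq_comm, RCLike.ofReal_eq_zero] at h
  rw [← zero_add n, ← fwdDiff_iter_comp_add]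
  simpa only [pow_add, mul_apply_eq_comp, Pi.zero_apply] using h

end IsometricDefect

/-- Let `S` be a bounded operator on a Hilbert space `H` with orthonormal basis
`(e_v)_{v ∈ V}` such that `Sⁿ e_u ⟂ Sⁿ e_v` for all `n` and all `u ≠ v`.  Fix `m ≥ 1` and
suppose that for every `v` there is a real polynomial `p_v` of degree at most `m - 1`
with `p_v(n) = ‖Sⁿ e_v‖²` for all `n ∈ ℕ`.  Then for every `f ∈ H` there is a real
polynomial `p_f` of degree at most `m - 1` with `p_f(n) = ‖Sⁿ f‖²` for all `n`
(equivalently, `S` is `m`-isometric). -/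
theorem stmt_12 {V : Type*} {H : Type*} [NormedAddCommGroup H] [InnerProductSpace ℂ H]
    [CompleteSpace H] (b : HilbertBasis V ℂ H) (S : H →L[ℂ] H) (m : ℕ) (hm : 1 ≤ m)
    (horth : ∀ n : ℕ, ∀ u v : V, u ≠ v → inner ℂ ((S ^ n) (b u)) ((S ^ n) (b v)) = (0 : ℂ))
    (hpoly : ∀ v : V, ∃ p : Polynomial ℝ, p.natDegree ≤ m - 1 ∧
      ∀ n : ℕ, p.eval (n : ℝ) = ‖(S ^ n) (b v)‖ ^ 2) :
    ∀ f : H, ∃ p : Polynomial ℝ, p.natDegree ≤ m - 1 ∧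
      ∀ n : ℕ, p.eval (n : ℝ) = ‖(S ^ n) f‖ ^ 2 := by
  obtain ⟨m, rfl⟩ := Nat.exists_eq_add_of_le' hm
  have hbasis (u : V) : isometricDefect S (m + 1) (b u) = 0 := by
    refine b.eq_zero_of_forall_inner_eq_zero fun v ↦ ?_
    rcases eq_or_ne v u with rfl | hvu
    · obtain ⟨p, hp, hpS⟩ := hpoly v
      have hΔ := p.fwdDiff_iter_eval_natCast_eq_zero (m := m + 1) (by omega)
      simp_rw [hpS] at hΔ
      rw [inner_isometricDefect_self, hΔ, Pi.zero_apply, RCLike.ofReal_zero]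
    · rw [inner_isometricDefect_apply]
      exact sum_eq_zero fun k _ ↦ by rw [horth k v u hvu, smul_zero]
  have hdefect : isometricDefect S (m + 1) = 0 :=
    ContinuousLinearMap.ext_on (Submodule.dense_iff_topologicalClosure_eq_top.mpr b.dense_span)
      (by rintro _ ⟨u, rfl⟩; exact hbasis u)
  intro f
  simpa using exists_polynomial_eval_eq_of_fwdDiff_iter_eq_zero
    (fwdDiff_iter_norm_sq_eq_zero_of_isometricDefect_eq_zero hdefect f)
end

section
/- Let S = S_{λ_T} be the weighted shift associated to T : X → X with connected graph G_T of cycle type (cycle v_0,…,v_{κ-1}, attached trees R). If S is an isometry, then R = ∅, i.e. V_T = {v_0,…,v_{κ-1}}; in particular ℓ²(V_T) is finite dimensional and S is unitary. -/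
/-!
The coefficients of `S e_u` are `√(w x / w u)` for `T x = u`, so `‖S e_u‖ = 1` bounds the total
weight of any finite set of preimages of `u` by `w u`. Along the cycle this makes `w` nonincreasing,
hence constant by periodicity; then `v (j + 1)` alone exhausts the budget of `v j`, so it is the
only preimage of `v j`. By connectedness every vertex lies on the cycle, so `X` is finite, and an
isometry of a finite-dimensional space is surjective.
-/

open scoped ENNReal

lemma Function.Periodic.eq_of_antitone {α : Type*} [PartialOrder α] {f : ℕ → α} {κ : ℕ}
    (hf : Function.Periodic f κ) (hκ : 0 < κ) (hanti : Antitone f) (m n : ℕ) : f m = f n := by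
  suffices h : ∀ n, f n = f 0 by rw [h m, h n]
  intro n
  refine le_antisymm (hanti n.zero_le) ?_
  calc f 0 = f (n * κ) := (hf.nat_mul_eq n).symm
    _ ≤ f n := hanti (Nat.le_mul_of_pos_right n hκ)

lemma lp.tsum_smul_single_apply {X 𝕜 : Type*} [DecidableEq X] [NormedField 𝕜] {p : ℝ≥0∞}
    [Fact (1 ≤ p)] {P : X → Prop} (c : {x // P x} → 𝕜)
    (hc : Summable fun y : {x // P x} => c y • lp.single (E := fun _ : X => 𝕜) p (y : X) 1)
    (x : {x // P x}) :
    (∑' y : {x // P x}, c y • lp.single (E := fun _ : X => 𝕜) p (y : X) 1) x = c x := by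
  change lp.evalCLM 𝕜 _ p (x : X) _ = _
  rw [ContinuousLinearMap.map_tsum _ hc, tsum_eq_single x]
  · simp [lp.evalCLM]
  · intro y hy
    have hne : (x : X) ≠ y := fun h => hy (Subtype.ext h.symm)
    simp [lp.evalCLM, hne]

lemma lp.finiteDimensional {X 𝕜 : Type*} [Finite X] [NontriviallyNormedField 𝕜] {p : ℝ≥0∞}
    [Fact (1 ≤ p)] : FiniteDimensional 𝕜 (lp (fun _ : X => 𝕜) p) :=
  have := Fintype.ofFinite X
  (lpPiLpₗᵢ (fun _ : X => 𝕜) 𝕜).toLinearEquiv.symm.finiteDimensional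

section WeightedShift

variable {X : Type*} [DecidableEq X] {w : X → ℝ} {T : X → X}

def IsWeightedShift (w : X → ℝ) (T : X → X)
    (S : lp (fun _ : X => ℂ) 2 →L[ℂ] lp (fun _ : X => ℂ) 2) : Prop :=
  ∀ u : X, S (lp.single 2 u (1:ℂ)) =
    ∑' (x : {x : X // T x = u}),
      ((Real.sqrt (w x / w (T (x : X))) : ℝ) : ℂ) • lp.single (E := fun _ : X => ℂ) 2 (x : X) 1

variable {S : lp (fun _ : X => ℂ) 2 →L[ℂ] lp (fun _ : X => ℂ) 2}

lemma IsWeightedShift.apply_single_of_isometry (hS : IsWeightedShift w T S)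
    (hiso : ∀ f, ‖S f‖ = ‖f‖) {u x : X} (hx : T x = u) :
    S (lp.single 2 u 1) x = ((Real.sqrt (w x / w u) : ℝ) : ℂ) := by
  have hsum : Summable fun y : {y : X // T y = u} =>
      ((Real.sqrt (w y / w (T (y : X))) : ℝ) : ℂ) •
        lp.single (E := fun _ : X => ℂ) 2 (y : X) 1 := by
    -- otherwise the `tsum` in `hS u` is the junk value `0`, but `‖S e_u‖ = 1`
    by_contra hsum
    have h := hiso (lp.single 2 u 1)
    rw [hS u, tsum_eq_zero_of_not_summable hsum, norm_zero, lp.norm_single (by norm_num)] at h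
    norm_num at h
  rw [hS u, lp.tsum_smul_single_apply _ hsum ⟨x, hx⟩, hx]

lemma IsWeightedShift.sum_fiber_le_of_isometry (hS : IsWeightedShift w T S)
    (hw : ∀ x, 0 < w x) (hiso : ∀ f, ‖S f‖ = ‖f‖) {u : X} {s : Finset X}
    (hs : ∀ x ∈ s, T x = u) : ∑ x ∈ s, w x ≤ w u := by
  have h := lp.sum_rpow_le_norm_rpow (p := 2) (by norm_num) (S (lp.single 2 u 1)) s
  rw [hiso, lp.norm_single (by norm_num), ENNReal.toReal_ofNat] at h
  have hcoef : ∀ x ∈ s, ‖S (lp.single 2 u 1) x‖ ^ (2:ℝ) = w x / w u := fun x hx => by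
    rw [hS.apply_single_of_isometry hiso (hs x hx), Complex.norm_real, Real.norm_eq_abs,
      Real.rpow_two, sq_abs, Real.sq_sqrt (div_nonneg (hw x).le (hw u).le)]
  rw [Finset.sum_congr rfl hcoef, ← Finset.sum_div] at h
  rwa [norm_one, Real.one_rpow, div_le_one (hw u)] at h

end WeightedShift

section Cycle

variable {X : Type*} {w : X → ℝ} {T : X → X} {κ : ℕ} {v : ℕ → X}

lemma weight_cycle_succ_eq (hfiber : ∀ u (s : Finset X), (∀ x ∈ s, T x = u) → ∑ x ∈ s, w x ≤ w u)
    (hκ : 0 < κ) (hper : Function.Periodic v κ) (hcyc : ∀ j, T (v (j + 1)) = v j) (j : ℕ) :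
    w (v (j + 1)) = w (v j) :=
  have hanti : Antitone (w ∘ v) := antitone_nat_of_succ_le fun j => by
    simpa using hfiber (v j) {v (j + 1)} (by simpa using hcyc j)
  (hper.comp w).eq_of_antitone hκ hanti _ _

lemma eq_cycle_succ_of_apply_eq (hw : ∀ x, 0 < w x)
    (hfiber : ∀ u (s : Finset X), (∀ x ∈ s, T x = u) → ∑ x ∈ s, w x ≤ w u)
    (hκ : 0 < κ) (hper : Function.Periodic v κ) (hcyc : ∀ j, T (v (j + 1)) = v j)
    {x : X} {j : ℕ} (hx : T x = v j) : x = v (j + 1) := by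
  classical
  by_contra hne
  have h := hfiber (v j) {x, v (j + 1)} (by simp [hx, hcyc])
  rw [Finset.sum_pair hne, weight_cycle_succ_eq hfiber hκ hper hcyc] at h
  linarith [hw x]

lemma apply_cycle_eq (hκ : 0 < κ) (hper : Function.Periodic v κ)
    (hcyc : ∀ j, T (v (j + 1)) = v j) (j : ℕ) : T (v j) = v (j + κ - 1) := by
  rw [← hper j, ← hcyc (j + κ - 1), Nat.sub_add_cancel (by omega)]

lemma exists_eq_cycle_of_reflTransGen (hw : ∀ x, 0 < w x)
    (hfiber : ∀ u (s : Finset X), (∀ x ∈ s, T x = u) → ∑ x ∈ s, w x ≤ w u)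
    (hκ : 0 < κ) (hper : Function.Periodic v κ) (hcyc : ∀ j, T (v (j + 1)) = v j) {x : X}
    (hx : Relation.ReflTransGen (fun a b => T b = a ∨ T a = b) (v 0) x) : ∃ j, x = v j := by
  induction hx with
  | refl => exact ⟨0, rfl⟩
  | tail _ hstep ih =>
    obtain ⟨j, rfl⟩ := ih
    rcases hstep with hchild | hparent
    · exact ⟨j + 1, eq_cycle_succ_of_apply_eq hw hfiber hκ hper hcyc hchild⟩
    · exact ⟨j + κ - 1, hparent ▸ apply_cycle_eq hκ hper hcyc j⟩

end Cycle

theorem stmt_17_general {X : Type*} [DecidableEq X]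
    (w : X → ℝ) (hw : ∀ x, 0 < w x) (T : X → X)
    (hconn : ∀ x y : X, Relation.ReflTransGen (fun a b => T b = a ∨ T a = b) x y)
    (S : lp (fun _ : X => ℂ) 2 →L[ℂ] lp (fun _ : X => ℂ) 2)
    (hS : ∀ u : X, S (lp.single 2 u (1:ℂ)) =
      ∑' (x : {x : X // T x = u}),
        ((Real.sqrt (w x / w (T (x : X))) : ℝ) : ℂ) •
          lp.single (E := fun _ : X => ℂ) 2 (x : X) 1)
    (κ : ℕ) (hκ : 1 ≤ κ) (v : ℕ → X)
    (hper : ∀ j : ℕ, v (j + κ) = v j)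
    (hcyc : ∀ j : ℕ, T (v (j + 1)) = v j)
    (hiso : ∀ f : lp (fun _ : X => ℂ) 2, ‖S f‖ = ‖f‖) :
    (∀ x : X, ∃ j < κ, x = v j) ∧
      FiniteDimensional ℂ (lp (fun _ : X => ℂ) 2) ∧
      Function.Surjective S := by
  have hfiber : ∀ u (s : Finset X), (∀ x ∈ s, T x = u) → ∑ x ∈ s, w x ≤ w u :=
    fun _ _ hs => IsWeightedShift.sum_fiber_le_of_isometry hS hw hiso hs
  have hcycle : ∀ x : X, ∃ j < κ, x = v j := fun x => by
    obtain ⟨j, rfl⟩ := exists_eq_cycle_of_reflTransGen hw hfiber hκ hper hcyc (hconn (v 0) x)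
    exact ⟨j % κ, Nat.mod_lt _ hκ, (Function.Periodic.map_mod_nat hper j).symm⟩
  have : Finite X := Finite.of_surjective (fun j : Fin κ => v j) fun x => by
    obtain ⟨j, hj, rfl⟩ := hcycle x
    exact ⟨⟨j, hj⟩, rfl⟩
  have hfin : FiniteDimensional ℂ (lp (fun _ : X => ℂ) 2) := lp.finiteDimensional
  exact ⟨hcycle, hfin,
    LinearMap.surjective_of_injective (f := (S : lp (fun _ : X => ℂ) 2 →ₗ[ℂ] _))
      (AddMonoidHomClass.isometry_of_norm S hiso).injective⟩

/-- Let `S` be the weighted shift on `ℓ²(X)` associated to `T : X → X` with connected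
graph `G_T` of cycle type (cycle `v_0, …, v_{κ-1}`).  If `S` is an isometry, then there
are no attached trees: every vertex lies on the cycle.  In particular `ℓ²(X)` is finite
dimensional and `S` is unitary (a surjective isometry). -/
theorem stmt_17 {X : Type*} [Countable X] [DecidableEq X]
    (w : X → ℝ) (hw : ∀ x, 0 < w x) (T : X → X)
    (hconn : ∀ x y : X, Relation.ReflTransGen (fun a b => T b = a ∨ T a = b) x y)
    (hT : ∃ B : ℝ, ∀ u : X, ∑' (x : {x : X // T x = u}), w x ≤ B * w u)
    (S : lp (fun _ : X => ℂ) 2 →L[ℂ] lp (fun _ : X => ℂ) 2)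
    (hS : ∀ u : X, S (lp.single 2 u (1:ℂ)) =
      ∑' (x : {x : X // T x = u}),
        ((Real.sqrt (w x / w (T (x : X))) : ℝ) : ℂ) •
          lp.single (E := fun _ : X => ℂ) 2 (x : X) 1)
    (κ : ℕ) (hκ : 1 ≤ κ) (v : ℕ → X)
    (hper : ∀ j : ℕ, v (j + κ) = v j)
    (hcyc : ∀ j : ℕ, T (v (j + 1)) = v j)
    (hinj : ∀ i < κ, ∀ j < κ, v i = v j → i = j)
    (hiso : ∀ f : lp (fun _ : X => ℂ) 2, ‖S f‖ = ‖f‖) :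
    (∀ x : X, ∃ j < κ, x = v j) ∧
      FiniteDimensional ℂ (lp (fun _ : X => ℂ) 2) ∧
      Function.Surjective S :=
  stmt_17_general w hw T hconn S hS κ hκ v hper hcyc hiso
end

section
/- Let μ be a finite positive Borel measure on [0,1], κ ≥ 1, D ∈ [0,1) and C ≥ 0 such that ∫ t^{n+κ} dμ(t) = D ∫ t^n dμ(t) + C for every n ∈ ℕ. Then μ is supported on {D^{1/κ}, 1}; i.e. μ = (1-α)·a·δ_{D^{1/κ}} + α·a·δ_1 where a = μ([0,1]) and α·a·(1-D) = C. -/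
/-!
Expanding the square and applying the recursion twice shows that
`Q n = ∫ t^n (t^κ - D)^2 dμ` equals `C (1 - D)` for every `n`. Hence
`∫ (1 - t)^2 (t^κ - D)^2 dμ = Q 0 - 2 Q 1 + Q 2 = 0`, so `μ` lives on the zero set
`{D^{1/κ}, 1}` of the nonnegative integrand, and `μ` is a combination of two Dirac masses.
The recursion at `n = 0` then reads `μ{1} (1 - D) = C`.
-/

open MeasureTheory

theorem MeasureTheory.Measure.eq_smul_dirac_add_smul_dirac_of_ae_mem_pair {α : Type*} [MeasurableSpace α]
    [MeasurableSingletonClass α] {μ : Measure α} {a b : α} (hab : a ≠ b)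
    (h : ∀ᵐ x ∂μ, x ∈ ({a, b} : Set α)) :
    μ = μ {a} • Measure.dirac a + μ {b} • Measure.dirac b := by
  conv_lhs => rw [← Measure.restrict_eq_self_of_ae_mem h]
  rw [Set.insert_eq, Measure.restrict_union (by simpa using hab) (measurableSet_singleton b),
    Measure.restrict_singleton, Measure.restrict_singleton]

theorem MeasureTheory.integral_smul_dirac_add_smul_dirac {α : Type*} [MeasurableSpace α]
    [MeasurableSingletonClass α] {μ : Measure α} [IsFiniteMeasure μ] {a b : α} (f : α → ℝ) :
    ∫ x, f x ∂(μ {a} • Measure.dirac a + μ {b} • Measure.dirac b) =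
      μ.real {a} * f a + μ.real {b} * f b := by
  rw [integral_add_measure, integral_smul_measure, integral_smul_measure, integral_dirac,
    integral_dirac]
  · simp [Measure.real]
  · exact (integrable_dirac (by simp)).smul_measure (measure_ne_top _ _)
  · exact (integrable_dirac (by simp)).smul_measure (measure_ne_top _ _)

theorem Continuous.integrable_of_ae_mem_Icc {μ : Measure ℝ} [IsFiniteMeasure μ] {a b : ℝ}
    {f : ℝ → ℝ} (hf : Continuous f) (hμ : ∀ᵐ t ∂μ, t ∈ Set.Icc a b) : Integrable f μ := by
  obtain ⟨M, hM⟩ := isCompact_Icc.exists_bound_of_continuousOn hf.continuousOn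
  exact .of_bound hf.aestronglyMeasurable M (hμ.mono hM)

theorem exists_mem_Icc_mul_add_eq {b c : ℝ} (hb : 0 ≤ b) (hc : 0 ≤ c) :
    ∃ α ∈ Set.Icc (0:ℝ) 1, (1 - α) * (b + c) = b ∧ α * (b + c) = c := by
  rcases (add_nonneg hb hc).eq_or_lt with h | h
  · refine ⟨0, by simp, by linarith, by linarith⟩
  · refine ⟨c / (b + c), ⟨by positivity, (div_le_one h).2 (by linarith)⟩, ?_, ?_⟩
    · field_simp; ring
    · field_simp

theorem pow_mul_pow_sub_sq (t D : ℝ) (n κ : ℕ) :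
    t ^ n * (t ^ κ - D) ^ 2 = t ^ (n + κ + κ) - 2 * D * t ^ (n + κ) + D ^ 2 * t ^ n := by
  rw [pow_add, pow_add]; ring

section Moments

variable {μ : Measure ℝ} {κ : ℕ} {D C : ℝ}

theorem integrable_pow_mul_pow_sub_sq (hint : ∀ n : ℕ, Integrable (fun t => t ^ n) μ) (n : ℕ) :
    Integrable (fun t => t ^ n * (t ^ κ - D) ^ 2) μ := by
  simp only [pow_mul_pow_sub_sq]
  exact ((hint _).sub ((hint _).const_mul _)).add ((hint _).const_mul _)

theorem integral_pow_mul_pow_sub_sq (hint : ∀ n : ℕ, Integrable (fun t => t ^ n) μ)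
    (hrec : ∀ n : ℕ, ∫ t, t ^ (n + κ) ∂μ = D * ∫ t, t ^ n ∂μ + C) (n : ℕ) :
    ∫ t, t ^ n * (t ^ κ - D) ^ 2 ∂μ = C * (1 - D) := by
  simp only [pow_mul_pow_sub_sq]
  -- `by exact` postpones elaboration, so the integrand is matched pointwise, not as `f - g`
  rw [integral_add (by exact (hint _).sub ((hint _).const_mul _)) ((hint _).const_mul _),
    integral_sub (hint _) ((hint _).const_mul _), integral_const_mul, integral_const_mul,
    hrec, hrec]
  ring

theorem integral_one_sub_mul_pow_sub_sq (hint : ∀ n : ℕ, Integrable (fun t => t ^ n) μ)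
    (hrec : ∀ n : ℕ, ∫ t, t ^ (n + κ) ∂μ = D * ∫ t, t ^ n ∂μ + C) :
    ∫ t, ((1 - t) * (t ^ κ - D)) ^ 2 ∂μ = 0 := by
  have hexp (t : ℝ) : ((1 - t) * (t ^ κ - D)) ^ 2 =
      t ^ 0 * (t ^ κ - D) ^ 2 - 2 * (t ^ 1 * (t ^ κ - D) ^ 2) + t ^ 2 * (t ^ κ - D) ^ 2 := by
    ring
  have hQ := integrable_pow_mul_pow_sub_sq (κ := κ) (D := D) hint
  simp only [hexp]
  rw [integral_add (by exact (hQ 0).sub ((hQ 1).const_mul 2)) (hQ 2),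
    integral_sub (hQ 0) ((hQ 1).const_mul 2), integral_const_mul,
    integral_pow_mul_pow_sub_sq hint hrec, integral_pow_mul_pow_sub_sq hint hrec,
    integral_pow_mul_pow_sub_sq hint hrec]
  ring

theorem ae_mem_pair_of_moment_recursion [IsFiniteMeasure μ]
    (hμ : ∀ᵐ t ∂μ, t ∈ Set.Icc (0:ℝ) 1) (hκ : κ ≠ 0)
    (hrec : ∀ n : ℕ, ∫ t, t ^ (n + κ) ∂μ = D * ∫ t, t ^ n ∂μ + C) :
    ∀ᵐ t ∂μ, t ∈ ({D ^ ((1:ℝ) / κ), 1} : Set ℝ) := by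
  have hcont : Continuous fun t : ℝ => ((1 - t) * (t ^ κ - D)) ^ 2 := by fun_prop
  have hzero := (integral_eq_zero_iff_of_nonneg (fun t => sq_nonneg _)
    (hcont.integrable_of_ae_mem_Icc hμ)).1
    (integral_one_sub_mul_pow_sub_sq (fun n => (continuous_pow n).integrable_of_ae_mem_Icc hμ) hrec)
  filter_upwards [hμ, hzero] with t ht h0
  rcases mul_eq_zero.1 (pow_eq_zero_iff two_ne_zero |>.1 h0) with h | h
  · right
    rw [Set.mem_singleton_iff]
    linarith
  · left
    rw [← sub_eq_zero.1 h, one_div, Real.pow_rpow_inv_natCast ht.1 hκ]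

end Moments

theorem stmt_19_general (μ : Measure ℝ) [IsFiniteMeasure μ]
    (hsupp : μ (Set.Icc (0:ℝ) 1)ᶜ = 0)
    (κ : ℕ) (hκ : 1 ≤ κ) (D : ℝ) (hD : D ∈ Set.Ico (0:ℝ) 1) (C : ℝ)
    (hrec : ∀ n : ℕ, ∫ t, t ^ (n + κ) ∂μ = D * ∫ t, t ^ n ∂μ + C) :
    ∃ α ∈ Set.Icc (0:ℝ) 1,
      μ = ENNReal.ofReal ((1 - α) * (μ Set.univ).toReal) •
            Measure.dirac (D ^ ((1:ℝ) / κ)) +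
          ENNReal.ofReal (α * (μ Set.univ).toReal) • Measure.dirac 1 ∧
      α * (μ Set.univ).toReal * (1 - D) = C := by
  obtain ⟨hD0, hD1⟩ := hD
  have hκ0 : κ ≠ 0 := by omega
  set r := D ^ ((1:ℝ) / κ) with hr_def
  have hrκ : r ^ κ = D := by rw [hr_def, one_div, Real.rpow_inv_natCast_pow hD0 hκ0]
  have hr1 : r ≠ 1 := (Real.rpow_lt_one hD0 hD1 (by positivity)).ne
  have hμ := Measure.eq_smul_dirac_add_smul_dirac_of_ae_mem_pair hr1
    (ae_mem_pair_of_moment_recursion (mem_ae_iff.2 hsupp) hκ0 hrec)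
  have hC : μ.real {1} * (1 - D) = C := by
    have h0 := hrec 0
    rw [hμ, integral_smul_dirac_add_smul_dirac, integral_smul_dirac_add_smul_dirac] at h0
    simp only [zero_add, hrκ, one_pow, pow_zero] at h0
    linarith
  have huniv : (μ Set.univ).toReal = μ.real {r} + μ.real {1} := by
    have h := integral_smul_dirac_add_smul_dirac (μ := μ) (a := r) (b := 1) (fun _ => 1)
    simp only [integral_const, smul_eq_mul, mul_one, ← hμ] at h
    exact h
  obtain ⟨α, hα, hαr, hα1⟩ := exists_mem_Icc_mul_add_eq measureReal_nonneg
    measureReal_nonneg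
  refine ⟨α, hα, ?_, ?_⟩
  · rw [huniv, hαr, hα1, ofReal_measureReal, ofReal_measureReal]
    exact hμ
  · rw [huniv, hα1, hC]

/-- Let `μ` be a finite positive Borel measure on `[0,1]`, `κ ≥ 1`, `D ∈ [0,1)` and
`C ≥ 0` such that `∫ t^{n+κ} dμ = D ∫ t^n dμ + C` for every `n ∈ ℕ`.  Then `μ` is
supported on `{D^{1/κ}, 1}`: writing `a = μ([0,1])`, we have
`μ = (1-α)·a·δ_{D^{1/κ}} + α·a·δ_1` for some `α ∈ [0,1]` with `α·a·(1-D) = C`. -/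
theorem stmt_19 (μ : Measure ℝ) [IsFiniteMeasure μ]
    (hsupp : μ (Set.Icc (0:ℝ) 1)ᶜ = 0)
    (κ : ℕ) (hκ : 1 ≤ κ) (D : ℝ) (hD : D ∈ Set.Ico (0:ℝ) 1) (C : ℝ) (hC : 0 ≤ C)
    (hrec : ∀ n : ℕ, ∫ t, t ^ (n + κ) ∂μ = D * ∫ t, t ^ n ∂μ + C) :
    ∃ α ∈ Set.Icc (0:ℝ) 1,
      μ = ENNReal.ofReal ((1 - α) * (μ Set.univ).toReal) •
            Measure.dirac (D ^ ((1:ℝ) / κ)) +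
          ENNReal.ofReal (α * (μ Set.univ).toReal) • Measure.dirac 1 ∧
      α * (μ Set.univ).toReal * (1 - D) = C :=
  stmt_19_general μ hsupp κ hκ D hD C hrec
end
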